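/- Let L be an atomistic complete lattice (length ≥ 2), T a t-norm on C(L), and T̄ the generated t-norm on L. Then T̄ = T_M (i.e., T̄(x,y) = x ∧ y for all x,y) if and only if T(u,u) = u for every atom u of L. -/

import Mathlib

def IsTnorm {L : Type*} [PartialOrder L] [BoundedOrder L] (T : L → L → L) : Prop :=
  (∀ x : L, Monotone (T x)) ∧ (∀ x y : L, T x y = T y x) ∧
  (∀ x y z : L, T x (T y z) = T (T x y) z) ∧ (∀ x : L, T x ⊤ = x)

open Classical in
noncomputable def TD {L : Type*} [Lattice L] [BoundedOrder L] (x y : L) : L :=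
  if x = ⊤ ∨ y = ⊤ then x ⊓ y else ⊥

def CL (L : Type*) [CompleteLattice L] : Set L := {x | IsAtom x ∨ x = ⊥ ∨ x = ⊤}

def kappa {L : Type*} [CompleteLattice L] (x : L) : Set L :=
  {u | u ∈ CL L ∧ u ≠ ⊥ ∧ u ≤ x}

noncomputable def Tbar {L : Type*} [CompleteLattice L] (T : L → L → L) (x y : L) : L :=
  ⨆ u ∈ kappa x, ⨆ v ∈ kappa y, T u v

def IsTnormOn {L : Type*} [PartialOrder L] [OrderTop L] (C : Set L) (T : L → L → L) : Prop :=
  (∀ x ∈ C, ∀ y ∈ C, T x y ∈ C) ∧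
  (∀ x ∈ C, ∀ y ∈ C, ∀ z ∈ C, y ≤ z → T x y ≤ T x z) ∧
  (∀ x ∈ C, ∀ y ∈ C, T x y = T y x) ∧
  (∀ x ∈ C, ∀ y ∈ C, ∀ z ∈ C, T x (T y z) = T (T x y) z) ∧
  (∀ x ∈ C, T x ⊤ = x)

open Classical in
noncomputable def Talpha {L : Type*} [CompleteLattice L] (α : Set L) (x y : L) : L :=
  if x = ⊤ ∨ y = ⊤ then x ⊓ y else if x = y ∧ x ∈ α then x else ⊥
/-! A t-norm on `C(L)` is bounded by the meet, so `T̄ ≤ ⊓` always. Conversely, in an atomistic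
lattice `x ⊓ y` is the join of the atoms `a ≤ x ⊓ y`, and each such `a = T a a` occurs among the
joinands of `T̄ x y`. For an atom `u`, `κ(u) = {u}`, so `T̄ u u = T u u`, which gives necessity. -/

lemma IsTnormOn.apply_le_inf {L : Type*} [SemilatticeInf L] [OrderTop L] {C : Set L}
    {T : L → L → L} (hT : IsTnormOn C T) (htop : ⊤ ∈ C) {x y : L} (hx : x ∈ C) (hy : y ∈ C) :
    T x y ≤ x ⊓ y := by
  obtain ⟨_, hmono, hcomm, _, hunit⟩ := hT
  refine le_inf ?_ ?_
  · simpa only [hunit x hx] using hmono x hx y hy ⊤ htop le_top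
  · simpa only [hcomm x hx y hy, hunit y hy] using hmono y hy x hx ⊤ htop le_top

section

variable {L : Type*} [CompleteLattice L]

lemma top_mem_CL : (⊤ : L) ∈ CL L := Or.inr (Or.inr rfl)

lemma IsAtom.mem_kappa {u x : L} (hu : IsAtom u) (hux : u ≤ x) : u ∈ kappa x :=
  ⟨Or.inl hu, hu.1, hux⟩

lemma IsAtom.kappa_eq {u : L} (hu : IsAtom u) : kappa u = {u} := by
  ext v
  refine ⟨fun ⟨_, hv0, hvu⟩ => ?_, fun hv => hv ▸ hu.mem_kappa le_rfl⟩
  exact hvu.eq_of_not_lt fun hlt => hv0 (hu.2 v hlt)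

lemma Tbar_self_of_isAtom (T : L → L → L) {u : L} (hu : IsAtom u) : Tbar T u u = T u u := by
  simp [Tbar, hu.kappa_eq]

lemma Tbar_le_inf {T : L → L → L} (hT : ∀ u ∈ CL L, ∀ v ∈ CL L, T u v ≤ u ⊓ v) (x y : L) :
    Tbar T x y ≤ x ⊓ y :=
  iSup₂_le fun u ⟨hu, _, hux⟩ => iSup₂_le fun v ⟨hv, _, hvy⟩ =>
    (hT u hu v hv).trans (inf_le_inf hux hvy)

lemma inf_le_Tbar [IsAtomistic L] {T : L → L → L} (hT : ∀ u : L, IsAtom u → T u u = u) (x y : L) :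
    x ⊓ y ≤ Tbar T x y := by
  rw [← sSup_atoms_le_eq (x ⊓ y)]
  refine sSup_le fun a ⟨ha, hle⟩ => ?_
  calc a = T a a := (hT a ha).symm
    _ ≤ Tbar T x y :=
      le_iSup₂_of_le a (ha.mem_kappa (hle.trans inf_le_left))
        (le_iSup₂_of_le a (ha.mem_kappa (hle.trans inf_le_right)) le_rfl)

end

theorem stmt7_general {L : Type*} [CompleteLattice L] [IsAtomistic L]
    (T : L → L → L)
    (hT : IsTnormOn (CL L) T) :
    (∀ x y : L, Tbar T x y = x ⊓ y) ↔ ∀ u : L, IsAtom u → T u u = u := by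
  refine ⟨fun h u hu => ?_, fun h x y => ?_⟩
  · rw [← Tbar_self_of_isAtom T hu, h, inf_idem]
  · exact (Tbar_le_inf (fun _ hu _ hv => hT.apply_le_inf top_mem_CL hu hv) x y).antisymm
      (inf_le_Tbar h x y)

theorem stmt7 {L : Type*} [CompleteLattice L] [IsAtomistic L]
    (hlen : ∃ x : L, x ≠ ⊥ ∧ x ≠ ⊤) (T : L → L → L)
    (hT : IsTnormOn (CL L) T) :
    (∀ x y : L, Tbar T x y = x ⊓ y) ↔ ∀ u : L, IsAtom u → T u u = u :=
  stmt7_general T hT
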